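/- arXiv:math/0408026 — 5 statements merged into one kernel-verified Lean document; each statement's English description precedes it below -/
import Mathlib

section
/- Any rectifiable curve γ in R^3 from a to b that stays outside the open unit ball B(p) centered at p, where r = |a-p| ≥ 1, s = |b-p| ≥ 1, and θ = ∠apb, has length at least m(r,s,θ), where m(r,s,θ) = sqrt(r²+s²-2rs·cos θ) if θ ≤ arccos(1/r)+arccos(1/s), and m(r,s,θ) = f(r)+f(s)+(θ-π) otherwise, with f(r) = sqrt(r²-1)+arcsin(1/r). -/
open Real Set

noncomputable def f (r : ℝ) : ℝ := Real.sqrt (r^2 - 1) + Real.arcsin (1/r)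

noncomputable def g (r : ℝ) : ℝ :=
  if r ≤ 2 then 2*Real.pi - 2*Real.arcsin (r/2) else Real.pi

noncomputable def m (r s θ : ℝ) : ℝ :=
  if θ ≤ Real.arccos (1/r) + Real.arccos (1/s) then
    Real.sqrt (r^2 + s^2 - 2*r*s*Real.cos θ)
  else f r + f s + (θ - Real.pi)

abbrev E3 := EuclideanSpace ℝ (Fin 3)

/-- A set `K` has thickness at least 1 (thickness = twice infimal circumradius over
triples of distinct points) iff no three distinct points of `K` lie on a common
sphere of radius less than `1/2`. -/
def ThickOne (K : Set E3) : Prop :=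
  ∀ x ∈ K, ∀ y ∈ K, ∀ z ∈ K, x ≠ y → y ≠ z → x ≠ z →
    ∀ (c : E3) (ρ : ℝ), dist x c = ρ → dist y c = ρ → dist z c = ρ → 1/2 ≤ ρ

/-!
In polar coordinates about `p`, `m r s θ` is the length of the shortest path outside the unit
disc from radius `r` to radius `s` that turns through the angle `θ`: a straight segment while
`θ ≤ arccos (1/r) + arccos (1/s)`, and otherwise two tangent segments joined by an arc of the unit
circle. Sample `γ` so finely that consecutive sample points `x_i` are seen from `p` under angles
`α_i ≤ η ≤ 1/2`. The key estimate is the approximate triangle inequality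
`m r v (ψ + α) ≤ m r u ψ + (1 + 3η) |x_i x_{i+1}|` for one step of the polygon (`u`, `v` the radii
of its endpoints, `α` its angle); summing it, and using that `m` is monotone in the angle and that
`∠ a p b ≤ ∑ α_i`, gives `m r s θ ≤ (1 + 3η) · length γ`. Let `η → 0`.
-/

namespace Detour

open EuclideanGeometry

-- For a point at distance `x ≥ 1` from the centre of the unit circle, `tangentLength x` is the
-- length of its tangent segments and `tangentAngle x` the angle at the centre between the point
-- and a point of tangency; `chord x y t` is the distance between points at distances `x` and `y`
-- from the centre seen from it under the angle `t`.
noncomputable def tangentLength (x : ℝ) : ℝ := √(x ^ 2 - 1)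

noncomputable def tangentAngle (x : ℝ) : ℝ := arccos (1 / x)

noncomputable def chord (x y t : ℝ) : ℝ := √(x ^ 2 + y ^ 2 - 2 * x * y * cos t)

variable {x y t : ℝ}

lemma tangentAngle_nonneg (x : ℝ) : 0 ≤ tangentAngle x := arccos_nonneg _

lemma tangentAngle_lt_pi_div_two (hx : 1 ≤ x) : tangentAngle x < π / 2 :=
  arccos_lt_pi_div_two.2 (by positivity)

lemma tangentAngle_add_le_pi (hx : 1 ≤ x) (hy : 1 ≤ y) : tangentAngle x + tangentAngle y ≤ π := by
  linarith [tangentAngle_lt_pi_div_two hx, tangentAngle_lt_pi_div_two hy]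

lemma tangentLength_nonneg (x : ℝ) : 0 ≤ tangentLength x := sqrt_nonneg _

lemma sq_tangentLength (hx : 1 ≤ x) : tangentLength x ^ 2 = x ^ 2 - 1 := sq_sqrt (by nlinarith)

lemma cos_tangentAngle (hx : 1 ≤ x) : cos (tangentAngle x) = 1 / x :=
  cos_arccos (by linarith [show 0 < 1 / x by positivity]) ((div_le_one (by linarith)).2 hx)

lemma sin_tangentAngle (hx : 1 ≤ x) : sin (tangentAngle x) = tangentLength x / x := by
  have hx0 : 0 < x := by linarith
  rw [tangentAngle, sin_arccos, tangentLength, show 1 - (1 / x) ^ 2 = (x ^ 2 - 1) / x ^ 2 by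
    field_simp, sqrt_div (by nlinarith), sqrt_sq hx0.le]

lemma tan_tangentAngle (hx : 1 ≤ x) : tan (tangentAngle x) = tangentLength x := by
  rw [tan_eq_sin_div_cos, sin_tangentAngle hx, cos_tangentAngle hx]
  field_simp

lemma cos_tangentAngle_add (hx : 1 ≤ x) (hy : 1 ≤ y) :
    cos (tangentAngle x + tangentAngle y) = (1 - tangentLength x * tangentLength y) / (x * y) := by
  rw [cos_add, cos_tangentAngle hx, cos_tangentAngle hy, sin_tangentAngle hx, sin_tangentAngle hy]
  field_simp

lemma cos_abs_tangentAngle_sub (hx : 1 ≤ x) (hy : 1 ≤ y) :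
    cos |tangentAngle x - tangentAngle y| = (1 + tangentLength x * tangentLength y) / (x * y) := by
  rw [cos_abs, cos_sub, cos_tangentAngle hx, cos_tangentAngle hy, sin_tangentAngle hx,
    sin_tangentAngle hy]
  field_simp

lemma chord_nonneg (x y t : ℝ) : 0 ≤ chord x y t := sqrt_nonneg _

lemma chord_comm (x y t : ℝ) : chord x y t = chord y x t := by
  rw [chord, chord]; ring_nf

lemma chord_self_zero (x : ℝ) : chord x x 0 = 0 := by
  rw [chord, cos_zero, show x ^ 2 + x ^ 2 - 2 * x * x * 1 = 0 by ring, sqrt_zero]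

lemma chord_eq_norm (x y t : ℝ) : chord x y t = ‖(x : ℂ) - y * Complex.exp (t * Complex.I)‖ := by
  rw [chord, Complex.norm_def, Complex.normSq_apply]
  congr 1
  simp only [Complex.sub_re, Complex.sub_im, Complex.mul_re, Complex.mul_im,
    Complex.exp_ofReal_mul_I_re, Complex.exp_ofReal_mul_I_im, Complex.ofReal_re, Complex.ofReal_im]
  linear_combination (-y ^ 2) * sin_sq_add_cos_sq t

lemma chord_add_le (x y z t u : ℝ) : chord x z (t + u) ≤ chord x y t + chord y z u := by
  simp only [chord_eq_norm]
  have h : (x : ℂ) - z * Complex.exp (↑(t + u) * Complex.I)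
      = ((x : ℂ) - y * Complex.exp (t * Complex.I))
        + Complex.exp (t * Complex.I) * ((y : ℂ) - z * Complex.exp (u * Complex.I)) := by
    push_cast
    rw [add_mul, Complex.exp_add]
    ring
  rw [h]
  refine (norm_add_le _ _).trans ?_
  rw [norm_mul, Complex.norm_exp_ofReal_mul_I, one_mul]

lemma chord_one_one_le (ht : 0 ≤ t) : chord 1 1 t ≤ t := by
  refine (sqrt_le_left ht).2 ?_
  nlinarith [one_sub_sq_div_two_le_cos (x := t)]

lemma two_mul_sin_half_le_chord (hxy : 1 ≤ x * y) : 2 * sin (t / 2) ≤ chord x y t := by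
  have h : x ^ 2 + y ^ 2 - 2 * x * y * cos t = (x - y) ^ 2 + x * y * (2 * sin (t / 2)) ^ 2 := by
    rw [mul_pow, sin_sq_eq_half_sub, show 2 * (t / 2) = t by ring]
    ring
  refine le_sqrt_of_sq_le ?_
  rw [h]
  nlinarith [sq_nonneg (x - y), sq_nonneg (2 * sin (t / 2))]

lemma sub_cube_le_chord (hxy : 1 ≤ x * y) (ht : 0 ≤ t) : t - t ^ 3 ≤ chord x y t := by
  rcases ht.eq_or_lt with rfl | ht
  · simpa using chord_nonneg x y 0
  have := sin_gt_sub_cube (half_pos ht)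
  nlinarith [two_mul_sin_half_le_chord (t := t) hxy, pow_pos ht 3]

lemma chord_le_chord (hx : 0 ≤ x) (hy : 0 ≤ y) {s : ℝ} (h0 : 0 ≤ s) (hst : s ≤ t) (htπ : t ≤ π) :
    chord x y s ≤ chord x y t := by
  refine sqrt_le_sqrt ?_
  nlinarith [cos_le_cos_of_nonneg_of_le_pi h0 htπ hst, mul_nonneg hx hy]

lemma chord_tangentAngle (hx : 1 ≤ x) : chord x 1 (tangentAngle x) = tangentLength x := by
  rw [chord, cos_tangentAngle hx, tangentLength]
  congr 1
  field_simp
  ring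

lemma chord_tangentAngle_add (hx : 1 ≤ x) (hy : 1 ≤ y) :
    chord x y (tangentAngle x + tangentAngle y) = tangentLength x + tangentLength y := by
  rw [chord, cos_tangentAngle_add hx hy, ← sqrt_sq (add_nonneg (tangentLength_nonneg x)
    (tangentLength_nonneg y))]
  congr 1
  field_simp
  linear_combination (-1) * sq_tangentLength hx + (-1) * sq_tangentLength hy

lemma chord_abs_tangentAngle_sub (hx : 1 ≤ x) (hy : 1 ≤ y) :
    chord x y |tangentAngle x - tangentAngle y| = |tangentLength x - tangentLength y| := by
  rw [chord, cos_abs_tangentAngle_sub hx hy, ← sqrt_sq_eq_abs]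
  congr 1
  field_simp
  linear_combination (-1) * sq_tangentLength hx + (-1) * sq_tangentLength hy

lemma continuous_chord (x y : ℝ) : Continuous (chord x y) := by
  unfold chord; fun_prop

lemma chord_radicand_pos (hx : 0 < x) (hy : 0 < y) (h : x ≠ y ∨ cos t ≠ 1) :
    0 < x ^ 2 + y ^ 2 - 2 * x * y * cos t := by
  have hc := cos_le_one t
  rcases h with h | h
  · nlinarith [sq_pos_of_ne_zero (sub_ne_zero_of_ne h), mul_nonneg (mul_nonneg hx.le hy.le)
      (sub_nonneg.2 hc)]
  · nlinarith [sq_nonneg (x - y), mul_pos (mul_pos hx hy) (sub_pos.2 (lt_of_le_of_ne hc h))]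

lemma hasDerivAt_chord (hq : 0 < x ^ 2 + y ^ 2 - 2 * x * y * cos t) :
    HasDerivAt (chord x y) (x * y * sin t / chord x y t) t := by
  convert (((hasDerivAt_cos t).const_mul (2 * x * y)).const_sub (x ^ 2 + y ^ 2)).sqrt hq.ne' using 1
  · rfl
  · rw [chord]
    field_simp

lemma sq_mul_sin_sub_chord_radicand (hx : 1 ≤ x) (hy : 1 ≤ y) :
    (x * y * sin t) ^ 2 - (x ^ 2 + y ^ 2 - 2 * x * y * cos t)
      = (tangentLength x * tangentLength y) ^ 2 - (x * y * cos t - 1) ^ 2 := by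
  rw [mul_pow (tangentLength x), sq_tangentLength hx, sq_tangentLength hy]
  linear_combination (x * y) ^ 2 * sin_sq_add_cos_sq t

lemma chord_le_mul_sin (hx : 1 ≤ x) (hy : 1 ≤ y)
    (hc : |x * y * cos t - 1| ≤ tangentLength x * tangentLength y) (hs : 0 ≤ sin t) :
    chord x y t ≤ x * y * sin t := by
  have h := pow_le_pow_left₀ (abs_nonneg _) hc 2
  rw [sq_abs] at h
  exact (sqrt_le_left (by positivity)).2
    (by linarith [sq_mul_sin_sub_chord_radicand (t := t) hx hy])

lemma mul_sin_le_chord (hx : 1 ≤ x) (hy : 1 ≤ y)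
    (hc : tangentLength x * tangentLength y ≤ x * y * cos t - 1) : x * y * sin t ≤ chord x y t := by
  have h := pow_le_pow_left₀ (mul_nonneg (tangentLength_nonneg x) (tangentLength_nonneg y)) hc 2
  exact le_sqrt_of_sq_le (by linarith [sq_mul_sin_sub_chord_radicand (t := t) hx hy])

lemma abs_tangentAngle_sub_le_add (x y : ℝ) :
    |tangentAngle x - tangentAngle y| ≤ tangentAngle x + tangentAngle y :=
  abs_sub_le_iff.2 ⟨by linarith [tangentAngle_nonneg y], by linarith [tangentAngle_nonneg x]⟩

-- The derivative `x * y * sin t / chord x y t - 1` of `chord x y t - t` is nonnegative exactly when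
-- `|x * y * cos t - 1| ≤ tangentLength x * tangentLength y`, that is, when `cos t` lies between
-- the cosines of `|tangentAngle x - tangentAngle y|` and `tangentAngle x + tangentAngle y`.
lemma monotoneOn_chord_sub_id (hx : 1 ≤ x) (hy : 1 ≤ y) :
    MonotoneOn (fun t => chord x y t - t)
      (Icc |tangentAngle x - tangentAngle y| (tangentAngle x + tangentAngle y)) := by
  have hT := tangentAngle_add_le_pi hx hy
  have hq : ∀ t ∈ Ioo |tangentAngle x - tangentAngle y| (tangentAngle x + tangentAngle y),
      0 < x ^ 2 + y ^ 2 - 2 * x * y * cos t := by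
    intro t ht
    refine chord_radicand_pos (by linarith) (by linarith) ?_
    rcases eq_or_ne x y with rfl | hxy
    · right
      rw [sub_self, abs_zero] at ht
      exact fun h => ht.1.ne' ((cos_eq_one_iff_of_lt_of_lt (by linarith [ht.1, pi_pos])
        (by linarith [ht.2, pi_pos])).1 h)
    · exact Or.inl hxy
  refine monotoneOn_of_hasDerivWithinAt_nonneg (convex_Icc _ _)
    ((continuous_chord x y).sub continuous_id).continuousOn
    (fun t ht => ((hasDerivAt_chord (hq t (by rwa [interior_Icc] at ht))).sub
      (hasDerivAt_id t)).hasDerivWithinAt) (fun t ht => ?_)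
  rw [interior_Icc] at ht
  have hC : 0 < chord x y t := sqrt_pos.2 (hq t ht)
  have ht0 : 0 ≤ t := (abs_nonneg _).trans ht.1.le
  have hlow := cos_le_cos_of_nonneg_of_le_pi ht0 hT ht.2.le
  have hupp := cos_le_cos_of_nonneg_of_le_pi (abs_nonneg _) (ht.2.le.trans hT) ht.1.le
  rw [cos_tangentAngle_add hx hy, div_le_iff₀ (by positivity)] at hlow
  rw [cos_abs_tangentAngle_sub hx hy, le_div_iff₀ (by positivity)] at hupp
  have h := chord_le_mul_sin hx hy (abs_le.2 ⟨by linarith, by linarith⟩)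
    (sin_nonneg_of_nonneg_of_le_pi ht0 (ht.2.le.trans hT))
  exact sub_nonneg.2 ((one_le_div hC).2 h)

lemma antitoneOn_chord_sub_id (hx : 1 ≤ x) (hy : 1 ≤ y) :
    AntitoneOn (fun t => chord x y t - t) (Icc 0 |tangentAngle x - tangentAngle y|) := by
  have hT := (abs_tangentAngle_sub_le_add x y).trans (tangentAngle_add_le_pi hx hy)
  have hq : ∀ t ∈ Ioo 0 |tangentAngle x - tangentAngle y|,
      0 < x ^ 2 + y ^ 2 - 2 * x * y * cos t := by
    intro t ht
    refine chord_radicand_pos (by linarith) (by linarith) (Or.inl ?_)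
    rintro rfl
    rw [sub_self, abs_zero] at ht
    exact ht.2.not_gt ht.1
  refine antitoneOn_of_hasDerivWithinAt_nonpos (convex_Icc _ _)
    ((continuous_chord x y).sub continuous_id).continuousOn
    (fun t ht => ((hasDerivAt_chord (hq t (by rwa [interior_Icc] at ht))).sub
      (hasDerivAt_id t)).hasDerivWithinAt) (fun t ht => ?_)
  rw [interior_Icc] at ht
  have hC : 0 < chord x y t := sqrt_pos.2 (hq t ht)
  have hc := cos_le_cos_of_nonneg_of_le_pi ht.1.le hT ht.2.le
  rw [cos_abs_tangentAngle_sub hx hy, div_le_iff₀ (by positivity)] at hc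
  have h := mul_sin_le_chord hx hy (t := t) (by linarith)
  exact sub_nonpos.2 ((div_le_one hC).2 h)

lemma chord_sub_le_chord_sub (hx : 1 ≤ x) (hy : 1 ≤ y) {s : ℝ}
    (hs : |tangentAngle x - tangentAngle y| ≤ s) (hst : s ≤ max t |tangentAngle x - tangentAngle y|)
    (ht0 : 0 ≤ t) (htT : t ≤ tangentAngle x + tangentAngle y) :
    chord x y s - s ≤ chord x y t - t := by
  rcases le_total |tangentAngle x - tangentAngle y| t with h | h
  · rw [max_eq_left h] at hst
    exact monotoneOn_chord_sub_id hx hy ⟨hs, hst.trans htT⟩ ⟨h, htT⟩ hst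
  · rw [max_eq_right h] at hst
    rw [le_antisymm hst hs]
    exact antitoneOn_chord_sub_id hx hy ⟨ht0, h⟩ ⟨abs_nonneg _, le_rfl⟩ h

lemma tan_add_tan_le_tan_add {a b : ℝ} (ha : 0 ≤ a) (hb : 0 ≤ b) (hab : a + b < π / 2) :
    tan a + tan b ≤ tan (a + b) := by
  have hca : 0 < cos a := cos_pos_of_mem_Ioo ⟨by linarith [pi_pos], by linarith⟩
  have hcb : 0 < cos b := cos_pos_of_mem_Ioo ⟨by linarith [pi_pos], by linarith⟩
  have hcab : 0 < cos (a + b) := cos_pos_of_mem_Ioo ⟨by linarith [pi_pos], hab⟩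
  have hsum : tan a + tan b = sin (a + b) / (cos a * cos b) := by
    rw [tan_eq_sin_div_cos, tan_eq_sin_div_cos, sin_add]
    field_simp
  have hle : cos (a + b) ≤ cos a * cos b := by
    rw [cos_add]
    nlinarith [sin_nonneg_of_nonneg_of_le_pi ha (by linarith [pi_pos]),
      sin_nonneg_of_nonneg_of_le_pi hb (by linarith [pi_pos])]
  rw [hsum, tan_eq_sin_div_cos]
  exact div_le_div_of_nonneg_left (sin_nonneg_of_nonneg_of_le_pi (by linarith) (by linarith))
    hcab hle

lemma tan_sub_self_le {a b : ℝ} (ha : 0 ≤ a) (hab : a ≤ b) (hb : b < π / 2) :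
    tan a - a ≤ tan b - b := by
  have h := tan_add_tan_le_tan_add ha (sub_nonneg.2 hab) (by linarith)
  rw [add_sub_cancel] at h
  linarith [le_tan (sub_nonneg.2 hab) (by linarith [pi_pos] : b - a < π / 2)]

-- `tan` grows at least as fast as the identity, so both differences have the same sign.
lemma abs_tan_sub_tan_sub_abs_sub {a b : ℝ} (ha : 0 ≤ a) (ha' : a < π / 2) (hb : 0 ≤ b)
    (hb' : b < π / 2) : |tan a - tan b| - |a - b| = |(tan a - a) - (tan b - b)| := by
  wlog hab : a ≤ b generalizing a b
  · rw [abs_sub_comm (tan a), abs_sub_comm a, abs_sub_comm (tan a - a)]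
    exact this hb hb' ha ha' (le_of_not_ge hab)
  have h := tan_sub_self_le ha hab hb'
  rw [abs_of_nonpos (by linarith), abs_of_nonpos (by linarith), abs_of_nonpos (by linarith)]
  ring

lemma tan_sub_self_add_le {a c d : ℝ} (ha : 0 ≤ a) (ha' : a < π / 2) (hc : 0 ≤ c)
    (hc' : c < π / 2) (hd : 0 ≤ d) (hd' : d < π / 2) (h : a + c ≤ |a - d| + |d - c|) :
    (tan a - a) + (tan c - c)
      ≤ |(tan a - a) - (tan d - d)| + |(tan d - d) - (tan c - c)| := by
  have hA := le_abs_self ((tan a - a) - (tan d - d))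
  have hA' := neg_abs_le ((tan a - a) - (tan d - d))
  have hC := le_abs_self ((tan d - d) - (tan c - c))
  have hC' := neg_abs_le ((tan d - d) - (tan c - c))
  rcases le_total a d with had | hda <;> rcases le_total d c with hdc | hcd
  · rw [abs_of_nonpos (sub_nonpos.2 had), abs_of_nonpos (sub_nonpos.2 hdc)] at h
    obtain rfl : a = 0 := by linarith
    simp only [tan_zero, sub_zero] at hA' ⊢
    linarith
  · rw [abs_of_nonpos (sub_nonpos.2 had), abs_of_nonneg (sub_nonneg.2 hcd)] at h
    have h1 := tan_add_tan_le_tan_add ha hc (by linarith)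
    have h2 := tan_sub_self_le (add_nonneg ha hc) (by linarith : a + c ≤ d) hd'
    linarith
  · rw [abs_of_nonneg (sub_nonneg.2 hda), abs_of_nonpos (sub_nonpos.2 hdc)] at h
    obtain rfl : d = 0 := by linarith
    simp only [tan_zero, sub_zero] at hA hC' ⊢
    linarith
  · rw [abs_of_nonneg (sub_nonneg.2 hda), abs_of_nonneg (sub_nonneg.2 hcd)] at h
    obtain rfl : c = 0 := by linarith
    simp only [tan_zero, sub_zero] at hC ⊢
    linarith

lemma f_eq_tangentLength (x : ℝ) : f x = tangentLength x - tangentAngle x + π / 2 := by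
  rw [f, tangentAngle, arccos_eq_pi_div_two_sub_arcsin, tangentLength]
  ring

lemma f_eq_tan_tangentAngle (hx : 1 ≤ x) : f x = tan (tangentAngle x) - tangentAngle x + π / 2 := by
  rw [f_eq_tangentLength, tan_tangentAngle hx]

lemma pi_div_two_le_f (hx : 1 ≤ x) : π / 2 ≤ f x := by
  rw [f_eq_tan_tangentAngle hx]
  linarith [le_tan (tangentAngle_nonneg x) (tangentAngle_lt_pi_div_two hx)]

lemma abs_f_sub_f_le_chord_sub (hx : 1 ≤ x) (hy : 1 ≤ y) (ht0 : 0 ≤ t)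
    (htT : t ≤ tangentAngle x + tangentAngle y) : |f x - f y| ≤ chord x y t - t := by
  have h := chord_sub_le_chord_sub hx hy le_rfl (le_max_right _ _) ht0 htT
  rw [chord_abs_tangentAngle_sub hx hy, ← tan_tangentAngle hx, ← tan_tangentAngle hy,
    abs_tan_sub_tan_sub_abs_sub (tangentAngle_nonneg x) (tangentAngle_lt_pi_div_two hx)
      (tangentAngle_nonneg y) (tangentAngle_lt_pi_div_two hy)] at h
  rwa [f_eq_tan_tangentAngle hx, f_eq_tan_tangentAngle hy, add_sub_add_right_eq_sub]

-- The segment is no longer than the path along a tangent, an arc of the unit circle and a tangent.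
lemma chord_le_f_add_f (hx : 1 ≤ x) (hy : 1 ≤ y) (ht : tangentAngle x + tangentAngle y ≤ t) :
    chord x y t ≤ f x + f y + (t - π) := by
  have h1 := chord_add_le x 1 y (tangentAngle x) (t - tangentAngle x)
  have h2 := chord_add_le 1 1 y (t - tangentAngle x - tangentAngle y) (tangentAngle y)
  have h3 := chord_one_one_le (t := t - tangentAngle x - tangentAngle y) (by linarith)
  rw [add_sub_cancel] at h1
  rw [sub_add_cancel, chord_comm 1 y (tangentAngle y), chord_tangentAngle hy] at h2
  rw [chord_tangentAngle hx] at h1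
  rw [f_eq_tangentLength, f_eq_tangentLength]
  linarith

lemma f_add_f_le_chord_add_chord {r u s ψ α : ℝ} (hr : 1 ≤ r) (hu : 1 ≤ u) (hs : 1 ≤ s)
    (hψ0 : 0 ≤ ψ) (hψT : ψ ≤ tangentAngle r + tangentAngle u)
    (hα0 : 0 ≤ α) (hαT : α ≤ tangentAngle u + tangentAngle s)
    (hsum : tangentAngle r + tangentAngle s ≤ ψ + α) :
    f r + f s + (ψ + α - π) ≤ chord r u ψ + chord u s α := by
  have hr' := tangentAngle_lt_pi_div_two hr
  have hu' := tangentAngle_lt_pi_div_two hu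
  have hs' := tangentAngle_lt_pi_div_two hs
  rcases le_total (tangentAngle r + tangentAngle s)
    (|tangentAngle r - tangentAngle u| + |tangentAngle u - tangentAngle s|) with hcase | hcase
  -- Here the minima of `chord - id` on the two pieces already suffice.
  · have h1 := abs_f_sub_f_le_chord_sub hr hu hψ0 hψT
    have h2 := abs_f_sub_f_le_chord_sub hu hs hα0 hαT
    have h3 := tan_sub_self_add_le (tangentAngle_nonneg r) hr' (tangentAngle_nonneg s) hs'
      (tangentAngle_nonneg u) hu' hcase
    rw [f_eq_tan_tangentAngle hr, f_eq_tan_tangentAngle hu, f_eq_tan_tangentAngle hs,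
      add_sub_add_right_eq_sub] at *
    linarith
  -- Otherwise shrink both angles, without increasing `chord - id`, to angles summing to
  -- `tangentAngle r + tangentAngle s`, and use the triangle inequality for `chord`.
  · set t₁ := |tangentAngle r - tangentAngle u|
    set t₂ := |tangentAngle u - tangentAngle s|
    set T := tangentAngle r + tangentAngle s
    set ψ' := max t₁ (T - max α t₂)
    have h1 : ψ' ≤ max ψ t₁ :=
      max_le (le_max_right _ _) (by linarith [le_max_left ψ t₁, le_max_left α t₂])
    have h2 : t₂ ≤ T - ψ' := by
      have : ψ' ≤ T - t₂ := max_le (by linarith) (by linarith [le_max_right α t₂])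
      linarith
    have h3 : T - ψ' ≤ max α t₂ := by linarith [le_max_right t₁ (T - max α t₂)]
    have hψ'ψ := chord_sub_le_chord_sub hr hu (le_max_left _ _) h1 hψ0 hψT
    have hα'α := chord_sub_le_chord_sub hu hs h2 h3 hα0 hαT
    have htri := chord_add_le r u s ψ' (T - ψ')
    rw [add_sub_cancel, chord_tangentAngle_add hr hs] at htri
    rw [f_eq_tangentLength, f_eq_tangentLength]
    linarith

lemma m_eq_ite (x y t : ℝ) :
    m x y t = if t ≤ tangentAngle x + tangentAngle y then chord x y t else f x + f y + (t - π) :=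
  rfl

lemma chord_le_m (hx : 1 ≤ x) (hy : 1 ≤ y) (t : ℝ) : chord x y t ≤ m x y t := by
  rw [m_eq_ite]
  split_ifs with h
  · exact le_rfl
  · exact chord_le_f_add_f hx hy (not_le.1 h).le

lemma m_mono (hx : 1 ≤ x) (hy : 1 ≤ y) {s : ℝ} (h0 : 0 ≤ s) (hst : s ≤ t) : m x y s ≤ m x y t := by
  have hT := tangentAngle_add_le_pi hx hy
  rw [m_eq_ite, m_eq_ite]
  split_ifs with hs ht ht
  · exact chord_le_chord (by linarith) (by linarith) h0 hst (ht.trans hT)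
  · have h := chord_le_chord (x := x) (y := y) (by linarith) (by linarith) h0 hs hT
    rw [chord_tangentAngle_add hx hy] at h
    rw [f_eq_tangentLength, f_eq_tangentLength]
    linarith [not_le.1 ht]
  · linarith
  · linarith

lemma m_self_zero (x : ℝ) : m x x 0 = 0 := by
  rw [m_eq_ite, if_pos (by linarith [tangentAngle_nonneg x]), chord_self_zero]

lemma tan_sub_self_le_cube {b : ℝ} (hb0 : 0 ≤ b) (hb : b ≤ 1 / 2) : tan b - b ≤ b ^ 3 := by
  have hc : 0 < cos b := cos_pos_of_mem_Ioo ⟨by linarith [pi_pos], by linarith [pi_gt_three]⟩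
  have hcos := one_sub_sq_div_two_le_cos (x := b)
  rw [tan_eq_sin_div_cos, div_sub' hc.ne', div_le_iff₀ hc]
  nlinarith [sin_le hb0, mul_nonneg (by positivity : (0:ℝ) ≤ b ^ 3 + b)
    (by linarith : (0:ℝ) ≤ cos b - (1 - b ^ 2 / 2)),
    mul_nonneg (pow_nonneg hb0 3) (by nlinarith : (0:ℝ) ≤ 1 - b ^ 2)]

lemma f_add_f_le_chord_add_cube (hx : 1 ≤ x) (hy : 1 ≤ y) {α : ℝ}
    (hT : tangentAngle x + tangentAngle y < α) (hα : α ≤ 1 / 2) :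
    f x + f y + (α - π) ≤ chord x y α + 3 * α ^ 3 := by
  have hx0 := tangentAngle_nonneg x
  have hy0 := tangentAngle_nonneg y
  have hbound : ∀ b, 0 ≤ b → b ≤ α → tan b - b ≤ α ^ 3 := fun b hb0 hbα =>
    (tan_sub_self_le_cube hb0 (hbα.trans hα)).trans (pow_le_pow_left₀ hb0 hbα 3)
  have hC := sub_cube_le_chord (one_le_mul_of_one_le_of_one_le hx hy) (by linarith : 0 ≤ α)
  rw [f_eq_tan_tangentAngle hx, f_eq_tan_tangentAngle hy]
  linarith [hbound _ hx0 (by linarith), hbound _ hy0 (by linarith)]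

lemma m_add_le {r u v ψ α : ℝ} (hr : 1 ≤ r) (hu : 1 ≤ u) (hv : 1 ≤ v) (hψ : 0 ≤ ψ)
    (hα0 : 0 ≤ α) (hα : α ≤ 1 / 2) : m r v (ψ + α) ≤ m r u ψ + chord u v α + 3 * α ^ 3 := by
  have hα3 : 0 ≤ 3 * α ^ 3 := by positivity
  rw [m_eq_ite r v]
  split_ifs with hb
  · linarith [chord_add_le r u v ψ α, chord_le_m hr hu ψ]
  rw [not_le] at hb
  rcases lt_or_ge (tangentAngle u + tangentAngle v) α with hp | hp
  · have hw := f_add_f_le_chord_add_cube hu hv hp hα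
    have hkey : f r + ψ ≤ m r u ψ + f u := by
      rw [m_eq_ite]
      split_ifs with hb2
      · linarith [abs_f_sub_f_le_chord_sub hr hu hψ hb2, le_abs_self (f r - f u)]
      · linarith [pi_div_two_le_f hu]
    linarith
  · rw [m_eq_ite]
    split_ifs with hb2
    · linarith [f_add_f_le_chord_add_chord hr hu hv hψ hb2 hα0 hp hb.le]
    · linarith [abs_f_sub_f_le_chord_sub hu hv hα0 hp, neg_abs_le (f u - f v)]

lemma m_add_le_mul_chord {r u v ψ α η : ℝ} (hr : 1 ≤ r) (hu : 1 ≤ u) (hv : 1 ≤ v) (hψ : 0 ≤ ψ)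
    (hα0 : 0 ≤ α) (hαη : α ≤ η) (hη : η ≤ 1 / 2) :
    m r v (ψ + α) ≤ m r u ψ + (1 + 3 * η) * chord u v α := by
  have h := m_add_le hr hu hv hψ hα0 (hαη.trans hη)
  have hC := sub_cube_le_chord (one_le_mul_of_one_le_of_one_le hu hv) hα0
  have h1 : α ^ 2 ≤ η / 2 := by nlinarith
  have h2 : α ^ 3 ≤ α * (η / 2) := by nlinarith
  have h3 : 3 * α / 4 ≤ chord u v α := by nlinarith
  nlinarith

section Polygon

variable {V P : Type*} [NormedAddCommGroup V] [InnerProductSpace ℝ V] [MetricSpace P]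
  [NormedAddTorsor V P]

lemma dist_eq_chord (x z p : P) : dist x z = chord (dist x p) (dist z p) (∠ x p z) := by
  rw [chord, ← sqrt_sq dist_nonneg, sq, sq, sq, law_cos x p z]

lemma angle_le_sum_angle (x : ℕ → P) {p : P} (h0 : x 0 ≠ p) (N : ℕ) :
    ∠ (x 0) p (x N) ≤ ∑ i ∈ Finset.range N, ∠ (x i) p (x (i + 1)) := by
  induction N with
  | zero => simp [angle_self_of_ne h0]
  | succ N ih =>
    rw [Finset.sum_range_succ]
    linarith [angle_le_angle_add_angle p (x 0) (x N) (x (N + 1))]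

lemma m_sum_angle_le_mul_sum_dist {x : ℕ → P} {p : P} {η : ℝ} (hη : η ≤ 1 / 2) (N : ℕ)
    (hx : ∀ i ≤ N, 1 ≤ dist (x i) p) (hα : ∀ i < N, ∠ (x i) p (x (i + 1)) ≤ η) :
    m (dist (x 0) p) (dist (x N) p) (∑ i ∈ Finset.range N, ∠ (x i) p (x (i + 1)))
      ≤ (1 + 3 * η) * ∑ i ∈ Finset.range N, dist (x i) (x (i + 1)) := by
  induction N with
  | zero => simp [m_self_zero]
  | succ N ih =>
    rw [Finset.sum_range_succ, Finset.sum_range_succ, mul_add, dist_eq_chord (x N) (x (N + 1)) p]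
    have hstep := m_add_le_mul_chord (hx 0 N.succ.zero_le) (hx N N.le_succ) (hx (N + 1) le_rfl)
      (Finset.sum_nonneg (s := Finset.range N) fun i _ => angle_nonneg (x i) p (x (i + 1)))
      (angle_nonneg _ _ _)
      (hα N N.lt_succ_self) hη
    linarith [ih (fun i hi => hx i (hi.trans N.le_succ))
      (fun i hi => hα i (hi.trans N.lt_succ_self))]

lemma m_angle_le_mul_sum_dist {x : ℕ → P} {p : P} {η : ℝ} (hη : η ≤ 1 / 2) (N : ℕ)
    (hx : ∀ i ≤ N, 1 ≤ dist (x i) p) (hα : ∀ i < N, ∠ (x i) p (x (i + 1)) ≤ η) :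
    m (dist (x 0) p) (dist (x N) p) (∠ (x 0) p (x N))
      ≤ (1 + 3 * η) * ∑ i ∈ Finset.range N, dist (x i) (x (i + 1)) := by
  have h0 : x 0 ≠ p := dist_pos.1 (by linarith [hx 0 N.zero_le])
  exact (m_mono (hx 0 N.zero_le) (hx N le_rfl) (angle_nonneg _ _ _)
    (angle_le_sum_angle x h0 N)).trans (m_sum_angle_le_mul_sum_dist hη N hx hα)

lemma exists_pos_forall_angle_lt {γ : ℝ → P} {p : P} {s : Set ℝ} (hs : IsCompact s)
    (hγ : ContinuousOn γ s) (hp : ∀ t ∈ s, γ t ≠ p) {η : ℝ} (hη : 0 < η) :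
    ∃ δ > 0, ∀ t ∈ s, ∀ t' ∈ s, dist t t' < δ → ∠ (γ t) p (γ t') < η := by
  have hcont : ContinuousOn (fun q : ℝ × ℝ => ∠ (γ q.1) p (γ q.2)) (s ×ˢ s) := by
    rintro ⟨t, t'⟩ ⟨ht, ht'⟩
    have h1 : ContinuousWithinAt (fun q : ℝ × ℝ => γ q.1) (s ×ˢ s) (t, t') :=
      (hγ t ht).comp continuousWithinAt_fst fun q hq => hq.1
    have h2 : ContinuousWithinAt (fun q : ℝ × ℝ => γ q.2) (s ×ˢ s) (t, t') :=
      (hγ t' ht').comp continuousWithinAt_snd fun q hq => hq.2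
    have h3 : ContinuousWithinAt (fun q : ℝ × ℝ => (γ q.1, p, γ q.2)) (s ×ˢ s) (t, t') :=
      h1.prodMk (continuousWithinAt_const.prodMk h2)
    exact ContinuousAt.comp_continuousWithinAt (f := fun q : ℝ × ℝ => (γ q.1, p, γ q.2))
      (continuousAt_angle (hp t ht) (hp t' ht')) h3
  obtain ⟨δ, hδ, h⟩ :=
    Metric.uniformContinuousOn_iff.1 ((hs.prod hs).uniformContinuousOn_of_continuous hcont) η hη
  refine ⟨δ, hδ, fun t ht t' ht' htt' => ?_⟩
  have := h (t, t) ⟨ht, ht⟩ (t, t') ⟨ht, ht'⟩ (by simpa [Prod.dist_eq] using htt')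
  rwa [angle_self_of_ne (hp t ht), dist_comm, Real.dist_eq, sub_zero,
    abs_of_nonneg (angle_nonneg _ _ _)] at this

lemma natCast_div_mem_Icc {i N : ℕ} (hi : i ≤ N) : (i / N : ℝ) ∈ Icc (0 : ℝ) 1 :=
  ⟨by positivity, div_le_one_of_le₀ (Nat.cast_le.2 hi) N.cast_nonneg⟩

lemma sum_dist_le_toReal_eVariationOn {E : Type*} [PseudoMetricSpace E] {γ : ℝ → E}
    (hγ : eVariationOn γ (Icc 0 1) ≠ ⊤) (N : ℕ) :
    ∑ i ∈ Finset.range N, dist (γ (i / N)) (γ ((i + 1 : ℕ) / N))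
      ≤ (eVariationOn γ (Icc 0 1)).toReal := by
  have h := eVariationOn.sum_le_of_monotoneOn_Iic (f := γ) (s := Icc (0 : ℝ) 1) (n := N)
    (u := fun i : ℕ => (i / N : ℝ))
    (fun i _ j _ hij => div_le_div_of_nonneg_right (Nat.cast_le.2 hij) N.cast_nonneg)
    (fun i hi => natCast_div_mem_Icc hi)
  rw [← ENNReal.ofReal_le_iff_le_toReal hγ, ENNReal.ofReal_sum_of_nonneg fun _ _ => dist_nonneg]
  simpa only [edist_dist, dist_comm] using h

lemma exists_pos_nat_forall_angle_lt {γ : ℝ → P} {p : P} (hγ : ContinuousOn γ (Icc 0 1))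
    (hp : ∀ t ∈ Icc (0 : ℝ) 1, γ t ≠ p) {η : ℝ} (hη : 0 < η) :
    ∃ N : ℕ, 0 < N ∧ ∀ i < N, ∠ (γ (i / N)) p (γ ((i + 1 : ℕ) / N)) < η := by
  obtain ⟨δ, hδ, hangle⟩ := exists_pos_forall_angle_lt isCompact_Icc hγ hp hη
  obtain ⟨n, hn⟩ := exists_nat_one_div_lt hδ
  refine ⟨n + 1, n.succ_pos, fun i hi =>
    hangle _ (natCast_div_mem_Icc hi.le) _ (natCast_div_mem_Icc hi) ?_⟩
  rw [dist_comm, Real.dist_eq, Nat.cast_succ, add_div, add_sub_cancel_left,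
    abs_of_pos (by positivity)]
  exact_mod_cast hn

lemma m_le_mul_toReal_eVariationOn {γ : ℝ → P} {p : P} (hγ : ContinuousOn γ (Icc 0 1))
    (hout : ∀ t ∈ Icc (0 : ℝ) 1, 1 ≤ dist (γ t) p) (htop : eVariationOn γ (Icc 0 1) ≠ ⊤)
    {η : ℝ} (hη0 : 0 < η) (hη : η ≤ 1 / 2) :
    m (dist (γ 0) p) (dist (γ 1) p) (∠ (γ 0) p (γ 1))
      ≤ (1 + 3 * η) * (eVariationOn γ (Icc 0 1)).toReal := by
  obtain ⟨N, hN, hangle⟩ := exists_pos_nat_forall_angle_lt hγ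
    (fun t ht => dist_pos.1 (one_pos.trans_le (hout t ht))) hη0
  have hm := m_angle_le_mul_sum_dist (x := fun i : ℕ => γ (i / N)) hη N
    (fun i hi => hout _ (natCast_div_mem_Icc hi)) (fun i hi => (hangle i hi).le)
  simp only [Nat.cast_zero, zero_div, div_self (Nat.cast_ne_zero.2 hN.ne' : (N : ℝ) ≠ 0)] at hm
  exact hm.trans (by gcongr; exact sum_dist_le_toReal_eVariationOn htop N)

end Polygon

end Detour

theorem stmt1_general (p a b : E3) (r s θ : ℝ)
    (hra : dist a p = r) (hsb : dist b p = s)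
    (hθ : θ = EuclideanGeometry.angle a p b)
    (γ : ℝ → E3) (hcont : ContinuousOn γ (Set.Icc 0 1))
    (hγa : γ 0 = a) (hγb : γ 1 = b)
    (hout : ∀ t ∈ Set.Icc (0:ℝ) 1, 1 ≤ dist (γ t) p) :
    ENNReal.ofReal (m r s θ) ≤ eVariationOn γ (Set.Icc 0 1) := by
  rcases eq_or_ne (eVariationOn γ (Icc 0 1)) ⊤ with htop | htop
  · simp [htop]
  set L := (eVariationOn γ (Icc 0 1)).toReal
  refine ENNReal.ofReal_le_of_le_toReal (le_of_forall_pos_le_add fun ε hε => ?_)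
  set η := min (1 / 2) (ε / (3 * (L + 1)))
  have hη : 0 < η := lt_min (by norm_num) (by positivity)
  have hηL : 3 * η * L ≤ ε := by
    have h := (le_div_iff₀ (by positivity)).1 (min_le_right (1 / 2) (ε / (3 * (L + 1))))
    nlinarith
  have h := Detour.m_le_mul_toReal_eVariationOn hcont hout htop hη (min_le_left _ _)
  rw [hγa, hγb, hra, hsb, ← hθ] at h
  linarith

/-- Any rectifiable curve from `a` to `b` staying outside the open unit ball `B(p)`,
with `r = |a-p| ≥ 1`, `s = |b-p| ≥ 1` and `θ = ∠apb`, has length at least `m(r,s,θ)`. -/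
theorem stmt1 (p a b : E3) (r s θ : ℝ) (hr : 1 ≤ r) (hs : 1 ≤ s)
    (hra : dist a p = r) (hsb : dist b p = s)
    (hθ : θ = EuclideanGeometry.angle a p b)
    (γ : ℝ → E3) (hcont : ContinuousOn γ (Set.Icc 0 1))
    (hγa : γ 0 = a) (hγb : γ 1 = b)
    (hout : ∀ t ∈ Set.Icc (0:ℝ) 1, 1 ≤ dist (γ t) p) :
    ENNReal.ofReal (m r s θ) ≤ eVariationOn γ (Set.Icc 0 1) :=
  stmt1_general p a b r s θ hra hsb hθ γ hcont hγa hγb hout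
end

section
/- For r ≥ 1 define f(r) = sqrt(r²-1) + arcsin(1/r) and g(r) = 2π - 2·arcsin(r/2) for r ≤ 2, g(r) = π for r ≥ 2. Then the minimum of f(r) + g(r) over r ∈ [1,∞) equals 7π/6 + sqrt(3), attained at r = 2. -/
open Real Set

/-!
`f` is increasing on `[1, ∞)`, since `f' r = √(r² - 1) / r`, and `g = π` on `[2, ∞)`, so only
`r ∈ [1, 2]` needs an argument. There the four bounds `√(r² - 1) ≥ √3 (r - 1)`,
`arcsin (1/r) ≥ π/6`, `arcsin (r/2) ≤ π/2 - √(2 - r)` (from `cos t ≥ 1 - t²/2`) and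
`2 √(2 - r) ≥ √3 (2 - r)` add up to `f r + g r ≥ 7π/6 + √3`; all are equalities at `r = 2`.
-/

lemma sqrt_one_sub_inv_sq {r : ℝ} (hr : 1 ≤ r) : √(1 - (1 / r) ^ 2) = √(r ^ 2 - 1) / r := by
  have hr0 : 0 < r := by linarith
  rw [show 1 - (1 / r) ^ 2 = (r ^ 2 - 1) / r ^ 2 by field_simp, sqrt_div (by nlinarith),
    sqrt_sq hr0.le]

lemma hasDerivAt_f {r : ℝ} (hr : 1 < r) : HasDerivAt f (√(r ^ 2 - 1) / r) r := by
  have hr0 : 0 < r := by linarith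
  have hsqrt : HasDerivAt (fun x : ℝ => √(x ^ 2 - 1)) (2 * r / (2 * √(r ^ 2 - 1))) r := by
    simpa using ((hasDerivAt_pow 2 r).sub_const 1).sqrt (by nlinarith)
  have hinv : HasDerivAt (fun x : ℝ => 1 / x) (-(r ^ 2)⁻¹) r := by
    simpa using hasDerivAt_inv hr0.ne'
  have hinv_lt : 1 / r < 1 := by rw [div_lt_one hr0]; exact hr
  have harcsin := (hasDerivAt_arcsin (by linarith [one_div_pos.2 hr0]) hinv_lt.ne).comp r hinv
  refine (hsqrt.add harcsin).congr_deriv ?_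
  rw [sqrt_one_sub_inv_sq hr.le]
  have hsq : √(r ^ 2 - 1) ^ 2 = r ^ 2 - 1 := sq_sqrt (by nlinarith)
  have hsqrt_ne : √(r ^ 2 - 1) ≠ 0 := (sqrt_pos.2 (by nlinarith)).ne'
  field_simp
  linear_combination -hsq

lemma monotoneOn_f : MonotoneOn f (Ici 1) := by
  refine monotoneOn_of_deriv_nonneg (convex_Ici 1) ?_ ?_ ?_
  · have hne : ∀ r ∈ Ici (1 : ℝ), r ≠ 0 := fun r hr => by linarith [mem_Ici.1 hr]
    unfold f
    fun_prop (disch := assumption)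
  · rw [interior_Ici]
    exact fun r hr => (hasDerivAt_f hr).differentiableAt.differentiableWithinAt
  · rw [interior_Ici]
    intro r hr
    rw [(hasDerivAt_f hr).deriv]
    exact div_nonneg (sqrt_nonneg _) (by linarith [mem_Ioi.1 hr])

lemma sqrt_three_mul_sub_one_le_sqrt_sq_sub_one {r : ℝ} (h1 : 1 ≤ r) (h2 : r ≤ 2) :
    √3 * (r - 1) ≤ √(r ^ 2 - 1) := by
  calc √3 * (r - 1) = √(3 * (r - 1) ^ 2) := by
        rw [sqrt_mul (by norm_num), sqrt_sq (by linarith)]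
    _ ≤ √(r ^ 2 - 1) := sqrt_le_sqrt (by nlinarith)

lemma arcsin_one_half : arcsin (1 / 2) = π / 6 := by
  rw [← sin_pi_div_six]
  exact arcsin_sin (by linarith [pi_pos]) (by linarith [pi_pos])

lemma pi_div_six_le_arcsin_one_div {r : ℝ} (h0 : 0 < r) (h2 : r ≤ 2) : π / 6 ≤ arcsin (1 / r) := by
  rw [← arcsin_one_half]
  exact monotone_arcsin (one_div_le_one_div_of_le h0 h2)

lemma arcsin_le_pi_div_two_sub_sqrt {x : ℝ} (hx₁ : -1 ≤ x) (hx₂ : x ≤ 1) :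
    arcsin x ≤ π / 2 - √(2 - 2 * x) := by
  set t := √(2 - 2 * x)
  have ht2 : t ^ 2 = 2 - 2 * x := sq_sqrt (by linarith)
  have ht_le : t ≤ 2 := by nlinarith [sqrt_nonneg (2 - 2 * x)]
  calc arcsin x ≤ arcsin (cos t) := monotone_arcsin (by nlinarith [one_sub_sq_div_two_le_cos (x := t)])
    _ = π / 2 - t := by
      rw [← sin_pi_div_two_sub]
      exact arcsin_sin (by linarith [pi_gt_three]) (by linarith [sqrt_nonneg (2 - 2 * x)])

lemma f_two : f 2 = √3 + π / 6 := by
  rw [f, ← arcsin_one_half]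
  norm_num

lemma g_of_two_le {r : ℝ} (hr : 2 ≤ r) : g r = π := by
  rcases hr.eq_or_lt with rfl | hlt
  · rw [g, if_pos le_rfl, div_self two_ne_zero, arcsin_one]; ring
  · exact if_neg (not_le.2 hlt)

lemma le_f_add_g_of_le_two {r : ℝ} (h1 : 1 ≤ r) (h2 : r ≤ 2) :
    7 * π / 6 + √3 ≤ f r + g r := by
  have hsqrt : √3 * (r - 1) ≤ √(r ^ 2 - 1) := sqrt_three_mul_sub_one_le_sqrt_sq_sub_one h1 h2
  have harcsin_inv : π / 6 ≤ arcsin (1 / r) := pi_div_six_le_arcsin_one_div (by linarith) h2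
  have harcsin_half : arcsin (r / 2) ≤ π / 2 - √(2 - r) := by
    simpa [mul_div_cancel₀] using arcsin_le_pi_div_two_sub_sqrt (x := r / 2) (by linarith) (by linarith)
  have hcross : √3 * (2 - r) ≤ 2 * √(2 - r) := by
    have ht : √(2 - r) ^ 2 = 2 - r := sq_sqrt (by linarith)
    have ht_le : √(2 - r) ≤ 1 := sqrt_le_one.2 (by linarith)
    have h3 : √3 ≤ 2 := by rw [sqrt_le_left (by norm_num)]; norm_num
    nlinarith [sqrt_nonneg (2 - r), sqrt_nonneg 3]
  rw [f, g, if_pos h2]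
  linarith

/-- The minimum of `f(r) + g(r)` over `r ∈ [1,∞)` is `7π/6 + √3`, attained at `r = 2`. -/
theorem stmt4 :
    (∀ r ∈ Set.Ici (1:ℝ), 7*Real.pi/6 + Real.sqrt 3 ≤ f r + g r) ∧
      f 2 + g 2 = 7*Real.pi/6 + Real.sqrt 3 := by
  have hvalue : f 2 + g 2 = 7 * π / 6 + √3 := by
    rw [f_two, g_of_two_le le_rfl]; ring
  refine ⟨fun r hr => ?_, hvalue⟩
  rcases le_total r 2 with hle | hge
  · exact le_f_add_g_of_le_two hr hle
  · calc 7 * π / 6 + √3 = f 2 + g 2 := hvalue.symm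
      _ ≤ f r + g r := by
        rw [g_of_two_le hge, g_of_two_le le_rfl]
        linarith [monotoneOn_f (by norm_num) hr hge]
end

section
/- Let K be a closed C^{1,1} curve in R^3 of thickness at least 1 (thickness defined as twice the infimal circumradius over all triples of distinct points of K). Then for any point a on K, the radial projection of K ∖ {a} to the unit sphere centered at a, x ↦ a + (x-a)/|x-a|, is 1-Lipschitz with respect to arclength on K, i.e., it does not increase the length of any subarc of K avoiding a. -/
open Real Set

/-!
Thickness at least 1 says every triangle with vertices on the curve has circumradius at least
1/2, so by the law of sines `sin ∠ x a y ≤ |x - y|` for all `x, y, a` on the curve. If `c` is the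
distance between the radial projections of `x` and `y` from `a`, then
`sin ∠ x a y = c √(1 - c²/4) ≥ (1 - c) c`, so the projection stretches short chords by at most a
factor tending to 1. Subdividing a parameter interval `[p, q]` finely (the projection is uniformly
continuous away from `a`) bounds the projected chord from `p` to `q` by the length of `γ` on
`[p, q]`, and additivity of variation over consecutive intervals gives the bound for the whole
variation.
-/

open EuclideanGeometry

theorem eVariationOn_le_of_edist_le {α E F : Type*} [LinearOrder α] [PseudoEMetricSpace E]
    [PseudoEMetricSpace F] {φ : α → E} {ψ : α → F} {s : Set α}
    (h : ∀ x ∈ s, ∀ y ∈ s, x ≤ y → edist (φ x) (φ y) ≤ eVariationOn ψ (s ∩ Icc x y)) :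
    eVariationOn φ s ≤ eVariationOn ψ s := by
  refine iSup_le fun ⟨n, u, hu, us⟩ => ?_
  calc ∑ i ∈ Finset.range n, edist (φ (u (i + 1))) (φ (u i))
      ≤ ∑ i ∈ Finset.range n, eVariationOn ψ (s ∩ Icc (u i) (u (i + 1))) :=
        Finset.sum_le_sum fun i _ => edist_comm (φ _) _ ▸ h _ (us i) _ (us (i + 1)) (hu i.le_succ)
    _ = eVariationOn ψ (s ∩ Icc (u 0) (u n)) := eVariationOn.sum ψ hu fun i _ _ => us i
    _ ≤ eVariationOn ψ s := eVariationOn.mono ψ inter_subset_left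

theorem exists_monotone_Icc_partition_dist_lt {p q η : ℝ} (hpq : p ≤ q) (hη : 0 < η) :
    ∃ (n : ℕ) (u : ℕ → ℝ), Monotone u ∧ u 0 = p ∧ u n = q ∧ (∀ i, u i ∈ Icc p q) ∧
      ∀ i, dist (u i) (u (i + 1)) < η := by
  obtain ⟨n, hn⟩ := exists_nat_gt ((q - p) / (η / 2))
  refine ⟨n, fun i => min (p + i * (η / 2)) q, fun i j hij => ?_, by simp [hpq], ?_,
    fun i => ⟨le_min (le_add_of_nonneg_right (by positivity)) hpq, min_le_right _ _⟩, fun i => ?_⟩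
  · dsimp only; gcongr
  · rw [div_lt_iff₀ (by positivity)] at hn
    exact min_eq_right (by linarith)
  · calc dist (min (p + i * (η / 2)) q) (min (p + (i + 1 : ℕ) * (η / 2)) q)
        ≤ max |p + i * (η / 2) - (p + (i + 1 : ℕ) * (η / 2))| |q - q| :=
          abs_min_sub_min_le_max _ _ _ _
      _ < η := by
          push_cast
          rw [show p + i * (η / 2) - (p + (i + 1) * (η / 2)) = -(η / 2) by ring, sub_self,
            abs_zero, abs_neg, abs_of_pos (half_pos hη), max_eq_left (half_pos hη).le]
          exact half_lt_self hη

theorem edist_le_eVariationOn_of_forall_lt_one {E F : Type*} [PseudoMetricSpace E]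
    [PseudoMetricSpace F] {φ : ℝ → E} {ψ : ℝ → F} {p q : ℝ} (hpq : p ≤ q)
    (hφ : ContinuousOn φ (Icc p q))
    (hloc : ∀ r < 1, ∃ δ > 0, ∀ x ∈ Icc p q, ∀ y ∈ Icc p q,
      dist (φ x) (φ y) < δ → r * dist (φ x) (φ y) ≤ dist (ψ x) (ψ y)) :
    edist (φ p) (φ q) ≤ eVariationOn ψ (Icc p q) := by
  refine ENNReal.le_of_forall_lt_one_mul_le fun r hr => ?_
  obtain ⟨δ, hδ, hδr⟩ := hloc r.toReal (ENNReal.toReal_lt_of_lt_ofReal (by simpa using hr))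
  obtain ⟨η, hη, hηδ⟩ := Metric.uniformContinuousOn_iff.1
    (isCompact_Icc.uniformContinuousOn_of_continuous hφ) δ hδ
  obtain ⟨n, u, hu, hu0, hun, hmem, hstep⟩ := exists_monotone_Icc_partition_dist_lt hpq hη
  have hterm : ∀ i, r * edist (φ (u i)) (φ (u (i + 1))) ≤ edist (ψ (u (i + 1))) (ψ (u i)) := by
    intro i
    rw [← ENNReal.ofReal_toReal hr.ne_top, edist_dist, edist_dist, ← ENNReal.ofReal_mul
      ENNReal.toReal_nonneg, dist_comm (ψ _)]
    exact ENNReal.ofReal_le_ofReal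
      (hδr _ (hmem i) _ (hmem (i + 1)) (hηδ _ (hmem i) _ (hmem _) (hstep i)))
  calc r * edist (φ p) (φ q)
      ≤ r * ∑ i ∈ Finset.range n, edist (φ (u i)) (φ (u (i + 1))) := by
        rw [← hu0, ← hun]; gcongr; exact edist_le_range_sum_edist (φ ∘ u) n
    _ ≤ ∑ i ∈ Finset.range n, edist (ψ (u (i + 1))) (ψ (u i)) := by
        rw [Finset.mul_sum]; exact Finset.sum_le_sum fun i _ => hterm i
    _ ≤ eVariationOn ψ (Icc p q) := eVariationOn.sum_le hu hmem

noncomputable def radialProj {V : Type*} [NormedAddCommGroup V] [NormedSpace ℝ V] (a x : V) : V :=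
  a + (dist x a)⁻¹ • (x - a)

section radialProj

variable {V : Type*} [NormedAddCommGroup V]

theorem continuousOn_radialProj [NormedSpace ℝ V] (a : V) : ContinuousOn (radialProj a) {a}ᶜ :=
  fun x hx => ContinuousAt.continuousWithinAt <| by
    have : dist x a ≠ 0 := dist_ne_zero.2 hx
    unfold radialProj
    fun_prop (disch := assumption)

theorem dist_radialProj_sq [InnerProductSpace ℝ V] {a x y : V} (hx : x ≠ a) (hy : y ≠ a) :
    dist (radialProj a x) (radialProj a y) ^ 2 = 2 - 2 * Real.cos (∠ x a y) := by
  have hx' : x - a ≠ 0 := sub_ne_zero.2 hx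
  have hy' : y - a ≠ 0 := sub_ne_zero.2 hy
  have hunit : ∀ v : V, v ≠ 0 → ‖‖v‖⁻¹ • v‖ = 1 := fun v hv => by
    simpa using norm_smul_inv_norm (𝕜 := ℝ) hv
  rw [radialProj, radialProj, dist_add_left, dist_eq_norm, dist_eq_norm, dist_eq_norm, sq,
    InnerProductGeometry.norm_sub_sq_eq_norm_sq_add_norm_sq_sub_two_mul_norm_mul_norm_mul_cos_angle,
    hunit _ hx', hunit _ hy',
    InnerProductGeometry.angle_smul_left_of_pos _ _ (inv_pos.2 (norm_pos_iff.2 hx')),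
    InnerProductGeometry.angle_smul_right_of_pos _ _ (inv_pos.2 (norm_pos_iff.2 hy'))]
  simp only [mul_one, EuclideanGeometry.angle, vsub_eq_sub]
  ring

end radialProj

theorem ThickOne.sin_angle_le_dist {K : Set E3} (hK : ThickOne K) {a x y : E3} (ha : a ∈ K)
    (hx : x ∈ K) (hy : y ∈ K) (hxa : x ≠ a) (hya : y ≠ a) : Real.sin (∠ x a y) ≤ dist x y := by
  by_cases hcol : Collinear ℝ {x, a, y}
  · rw [(collinear_iff_eq_or_eq_or_sin_eq_zero.1 hcol).resolve_left hxa |>.resolve_left hya]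
    exact dist_nonneg
  let t : Affine.Triangle ℝ E3 := ⟨![x, a, y], affineIndependent_iff_not_collinear_set.2 hcol⟩
  have hsin := t.dist_div_sin_angle_eq_two_mul_circumradius (i₁ := 0) (i₂ := 1) (i₃ := 2)
    (by decide) (by decide) (by decide)
  have hR : 1 / 2 ≤ t.circumradius := hK x hx a ha y hy hxa hya.symm
    (t.independent.injective.ne (show (0 : Fin 3) ≠ 2 by decide))
    t.circumcenter _ (t.dist_circumcenter_eq_circumradius 0)
    (t.dist_circumcenter_eq_circumradius 1) (t.dist_circumcenter_eq_circumradius 2)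
  simp only [Fin.isValue, Matrix.cons_val_zero, Matrix.cons_val, Matrix.cons_val_one, t] at hsin
  have hsin_pos := sin_pos_of_not_collinear hcol
  rw [div_eq_iff hsin_pos.ne'] at hsin
  nlinarith

theorem ThickOne.one_sub_mul_dist_radialProj_le {K : Set E3} (hK : ThickOne K) {a x y : E3}
    (ha : a ∈ K) (hx : x ∈ K) (hy : y ∈ K) (hxa : x ≠ a) (hya : y ≠ a) :
    (1 - dist (radialProj a x) (radialProj a y)) * dist (radialProj a x) (radialProj a y)
      ≤ dist x y := by
  set c := dist (radialProj a x) (radialProj a y)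
  have hc : 0 ≤ c := dist_nonneg
  have hsin0 : 0 ≤ Real.sin (∠ x a y) :=
    sin_nonneg_of_nonneg_of_le_pi (angle_nonneg _ _ _) (angle_le_pi _ _ _)
  have hsin_sq : Real.sin (∠ x a y) ^ 2 = c ^ 2 * (4 - c ^ 2) / 4 := by
    rw [Real.sin_sq, show Real.cos (∠ x a y) = 1 - c ^ 2 / 2 by
      linarith [dist_radialProj_sq hxa hya]]
    ring
  refine le_trans ?_ (hK.sin_angle_le_dist ha hx hy hxa hya)
  -- (1 - c)² ≤ 1 - c²/4 for 0 ≤ c ≤ 1, and the left-hand side is nonpositive for c ≥ 1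
  nlinarith

theorem stmt9_general (γ : ℝ → E3) (hcont : Continuous γ)
    (hthick : ThickOne (Set.range γ))
    (a : E3) (ha : a ∈ Set.range γ)
    (s t : ℝ) (havoid : a ∉ γ '' Set.Icc s t) :
    eVariationOn (fun u => a + (dist (γ u) a)⁻¹ • (γ u - a)) (Set.Icc s t)
      ≤ eVariationOn γ (Set.Icc s t) := by
  have hmaps : MapsTo γ (Icc s t) {a}ᶜ := fun u hu hua => havoid ⟨u, hu, hua⟩
  have hcont' : ContinuousOn (radialProj a ∘ γ) (Icc s t) :=
    (continuousOn_radialProj a).comp hcont.continuousOn hmaps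
  refine eVariationOn_le_of_edist_le fun p hp q hq hpq => ?_
  have hsub : Icc p q ⊆ Icc s t := Icc_subset_Icc hp.1 hq.2
  refine (edist_le_eVariationOn_of_forall_lt_one hpq (hcont'.mono hsub) fun r hr => ?_).trans
    (eVariationOn.mono γ (subset_inter hsub subset_rfl))
  refine ⟨1 - r, sub_pos.2 hr, fun x hx y hy hxy => ?_⟩
  rw [Function.comp_apply, Function.comp_apply] at hxy ⊢
  calc r * dist (radialProj a (γ x)) (radialProj a (γ y))
      ≤ (1 - dist (radialProj a (γ x)) (radialProj a (γ y))) *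
          dist (radialProj a (γ x)) (radialProj a (γ y)) := by gcongr; linarith
    _ ≤ dist (γ x) (γ y) := hthick.one_sub_mul_dist_radialProj_le ha ⟨x, rfl⟩ ⟨y, rfl⟩
          (hmaps (hsub hx)) (hmaps (hsub hy))

/-- For a closed curve `γ` of thickness at least 1 and a point `a` on the curve,
radial projection to the unit sphere around `a` does not increase the length of
any subarc of the curve avoiding `a`. -/
theorem stmt9 (γ : ℝ → E3) (L : ℝ) (hL : 0 < L) (hcont : Continuous γ)
    (hper : Function.Periodic γ L) (hinj : Set.InjOn γ (Set.Ico 0 L))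
    (hthick : ThickOne (Set.range γ))
    (a : E3) (ha : a ∈ Set.range γ)
    (s t : ℝ) (hst : s ≤ t) (havoid : a ∉ γ '' Set.Icc s t) :
    eVariationOn (fun u => a + (dist (γ u) a)⁻¹ • (γ u - a)) (Set.Icc s t)
      ≤ eVariationOn γ (Set.Icc s t) :=
  stmt9_general γ hcont hthick a ha s t havoid
end

section
/- Let K be a closed curve of thickness at least 1, and let p, a, b ∈ K with p not in the subarc of K from a to b (for a chosen orientation). Then the arclength of that subarc from a to b is at least the angle ∠apb between the vectors a-p and b-p. -/
open Real Set

/-!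
For points `x, y, p` of a curve of thickness at least 1, `sin ∠xpy ≤ dist x y`: by the law of
sines `dist x y = 2 R sin ∠xpy`, and the circumradius `R` of `x, p, y` is at least `1/2`. Along a
fine partition of the arc the angles `∠ (γ uᵢ) p (γ uᵢ₊₁)` are small, so `sin` is almost the
identity on them, and their sum dominates `∠apb` by the triangle inequality for angles.
-/

open EuclideanGeometry

theorem exists_pos_forall_mul_le_sin {c : ℝ} (hc : c < 1) :
    ∃ δ > 0, ∀ φ, 0 ≤ φ → φ < δ → c * φ ≤ Real.sin φ := by
  refine ⟨√(6 * (1 - c)), by positivity, fun φ hφ hφδ => ?_⟩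
  have hφ2 : φ ^ 2 < 6 * (1 - c) := (Real.lt_sqrt hφ).mp hφδ
  nlinarith [Real.sin_ge_sub_cube hφ]

theorem exists_monotone_partition {s t η : ℝ} (hst : s ≤ t) (hη : 0 < η) :
    ∃ (n : ℕ) (u : ℕ → ℝ), Monotone u ∧ u 0 = s ∧ u n = t ∧ (∀ i ≤ n, u i ∈ Icc s t) ∧
      ∀ i, dist (u i) (u (i + 1)) < η := by
  obtain ⟨n, hn⟩ := exists_nat_gt ((t - s) / η)
  have hn' : (0 : ℝ) < n + 1 := by positivity
  set h := (t - s) / (n + 1) with hh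
  have h0 : 0 ≤ h := div_nonneg (sub_nonneg.mpr hst) hn'.le
  have hnh : (n + 1) * h = t - s := by rw [hh]; field_simp
  have hhη : h < η := by
    rw [div_lt_iff₀ hη] at hn
    rw [hh, div_lt_iff₀ hn']
    nlinarith
  refine ⟨n + 1, fun i => s + i * h, fun i j hij => ?_, by simp, by push_cast; linarith,
    fun i hi => ⟨?_, ?_⟩, fun i => ?_⟩
  · dsimp only
    gcongr
  · exact le_add_of_nonneg_right (by positivity)
  · have : (i : ℝ) ≤ n + 1 := by exact_mod_cast hi
    dsimp only
    nlinarith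
  · rw [Real.dist_eq, abs_sub_comm]
    push_cast
    rw [show s + (i + 1) * h - (s + i * h) = h by ring, abs_of_nonneg h0]
    exact hhη

section

variable {V P : Type*} [NormedAddCommGroup V] [InnerProductSpace ℝ V] [MetricSpace P]
  [NormedAddTorsor V P]

theorem angle_le_sum_angle {x : ℕ → P} {p : P} (hx : x 0 ≠ p) (n : ℕ) :
    ∠ (x 0) p (x n) ≤ ∑ i ∈ Finset.range n, ∠ (x i) p (x (i + 1)) := by
  induction n with
  | zero => simp [angle_self_of_ne hx]
  | succ n ih =>
    rw [Finset.sum_range_succ]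
    exact (angle_le_angle_add_angle p _ (x n) _).trans (by linarith)

theorem exists_pos_forall_angle_lt {α : Type*} [PseudoMetricSpace α] {S : Set α}
    (hS : IsCompact S) {γ : α → P} (hγ : ContinuousOn γ S) {p : P} (hp : ∀ r ∈ S, γ r ≠ p)
    {δ : ℝ} (hδ : 0 < δ) :
    ∃ η > 0, ∀ r ∈ S, ∀ r' ∈ S, dist r r' < η → ∠ (γ r) p (γ r') < δ := by
  have hcont : ContinuousOn (fun q : α × α => ∠ (γ q.1) p (γ q.2)) (S ×ˢ S) := by
    intro q hq
    have hγ₁ := hγ.comp continuousOn_fst (fun _ h => h.1) q hq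
    have hγ₂ := hγ.comp continuousOn_snd (fun _ h => h.2) q hq
    exact ContinuousAt.comp_continuousWithinAt (f := fun q : α × α => (γ q.1, p, γ q.2))
      (continuousAt_angle (x := (γ q.1, p, γ q.2)) (hp _ hq.1) (hp _ hq.2))
      (hγ₁.prodMk (continuousWithinAt_const.prodMk hγ₂))
  obtain ⟨η, hη, hclose⟩ := Metric.uniformContinuousOn_iff.mp
    ((hS.prod hS).uniformContinuousOn_of_continuous hcont) δ hδ
  refine ⟨η, hη, fun r hr r' hr' hrr' => ?_⟩
  have := hclose (r, r') ⟨hr, hr'⟩ (r', r') ⟨hr', hr'⟩ (by simpa [Prod.dist_eq] using hrr')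
  rw [angle_self_of_ne (hp r' hr'), Real.dist_eq, sub_zero] at this
  exact (le_abs_self _).trans_lt this

theorem ofReal_angle_le_eVariationOn {γ : ℝ → P} {p : P} {s t : ℝ} (hst : s ≤ t)
    (hγ : ContinuousOn γ (Icc s t)) (hp : ∀ r ∈ Icc s t, γ r ≠ p)
    (hsin : ∀ r ∈ Icc s t, ∀ r' ∈ Icc s t, Real.sin (∠ (γ r) p (γ r')) ≤ dist (γ r) (γ r')) :
    ENNReal.ofReal (∠ (γ s) p (γ t)) ≤ eVariationOn γ (Icc s t) := by
  refine ENNReal.le_of_forall_lt_one_mul_le fun c hc => ?_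
  lift c to NNReal using hc.ne_top
  have hc1 : (c : ℝ) < 1 := by exact_mod_cast hc
  obtain ⟨δ, hδ, hmul_le_sin⟩ := exists_pos_forall_mul_le_sin hc1
  obtain ⟨η, hη, hangle⟩ := exists_pos_forall_angle_lt isCompact_Icc hγ hp hδ
  obtain ⟨n, u, hu, hu0, hun, huI, hstep⟩ := exists_monotone_partition hst hη
  have hlocal : ∀ i < n, c * ∠ (γ (u i)) p (γ (u (i + 1))) ≤ dist (γ (u i)) (γ (u (i + 1))) :=
    fun i hi => (hmul_le_sin _ (angle_nonneg _ _ _)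
      (hangle _ (huI i hi.le) _ (huI (i + 1) hi) (hstep i))).trans
      (hsin _ (huI i hi.le) _ (huI (i + 1) hi))
  have hsum : c * ∠ (γ s) p (γ t) ≤ ∑ i ∈ Finset.range n, dist (γ (u i)) (γ (u (i + 1))) := by
    calc c * ∠ (γ s) p (γ t)
        ≤ c * ∑ i ∈ Finset.range n, ∠ (γ (u i)) p (γ (u (i + 1))) := by
          rw [← hu0, ← hun]
          exact mul_le_mul_of_nonneg_left
            (angle_le_sum_angle (x := fun i => γ (u i)) (hp _ (huI 0 n.zero_le)) n) c.coe_nonneg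
      _ ≤ ∑ i ∈ Finset.range n, dist (γ (u i)) (γ (u (i + 1))) := by
          rw [Finset.mul_sum]
          exact Finset.sum_le_sum fun i hi => hlocal i (Finset.mem_range.mp hi)
  calc (c : ENNReal) * ENNReal.ofReal (∠ (γ s) p (γ t))
      = ENNReal.ofReal (c * ∠ (γ s) p (γ t)) := by
        rw [ENNReal.ofReal_mul c.coe_nonneg, ENNReal.ofReal_coe_nnreal]
    _ ≤ ENNReal.ofReal (∑ i ∈ Finset.range n, dist (γ (u i)) (γ (u (i + 1)))) :=
        ENNReal.ofReal_le_ofReal hsum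
    _ = ∑ i ∈ Finset.Ico 0 n, edist (γ (u (i + 1))) (γ (u i)) := by
        rw [ENNReal.ofReal_sum_of_nonneg fun _ _ => dist_nonneg, Finset.range_eq_Ico]
        simp only [edist_dist, dist_comm]
    _ ≤ eVariationOn γ (Icc s t) :=
        eVariationOn.sum_le_of_monotoneOn_Icc (hu.monotoneOn _) fun i hi => huI i hi.2

end

theorem sin_angle_le_dist_of_thickOne {K : Set E3} (hK : ThickOne K) {x y p : E3}
    (hx : x ∈ K) (hy : y ∈ K) (hp : p ∈ K) (hxp : x ≠ p) (hyp : y ≠ p) :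
    Real.sin (∠ x p y) ≤ dist x y := by
  by_cases hcol : Collinear ℝ {x, p, y}
  · rw [((collinear_iff_eq_or_eq_or_sin_eq_zero.mp hcol).resolve_left hxp).resolve_left hyp]
    exact dist_nonneg
  let T : Affine.Triangle ℝ E3 := ⟨![x, p, y], affineIndependent_iff_not_collinear_set.mpr hcol⟩
  have hsine : dist x y / Real.sin (∠ x p y) = 2 * T.circumradius :=
    T.dist_div_sin_angle_eq_two_mul_circumradius (i₁ := 0) (i₂ := 1) (i₃ := 2)
      (by decide) (by decide) (by decide)
  have hxy : x ≠ y := T.independent.injective.ne (show (0 : Fin 3) ≠ 2 by decide)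
  have hR : 1 / 2 ≤ T.circumradius := hK x hx y hy p hp hxy hyp hxp T.circumcenter _
    (T.dist_circumcenter_eq_circumradius 0) (T.dist_circumcenter_eq_circumradius 2)
    (T.dist_circumcenter_eq_circumradius 1)
  have hsin := sin_pos_of_not_collinear hcol
  rw [div_eq_iff hsin.ne'] at hsine
  nlinarith

theorem stmt10_general (γ : ℝ → E3) (hcont : Continuous γ)
    (hthick : ThickOne (Set.range γ))
    (p a b : E3) (s t : ℝ) (hst : s ≤ t)
    (hγs : γ s = a) (hγt : γ t = b)
    (hp : p ∈ Set.range γ) (hpnot : p ∉ γ '' Set.Icc s t) :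
    ENNReal.ofReal (EuclideanGeometry.angle a p b) ≤ eVariationOn γ (Set.Icc s t) := by
  have hγp : ∀ r ∈ Icc s t, γ r ≠ p := fun r hr h => hpnot ⟨r, hr, h⟩
  subst hγs hγt
  exact ofReal_angle_le_eVariationOn hst hcont.continuousOn hγp fun r hr r' hr' =>
    sin_angle_le_dist_of_thickOne hthick (mem_range_self r) (mem_range_self r') hp (hγp r hr)
      (hγp r' hr')

/-- For a closed curve of thickness at least 1 and points `p, a, b` on the curve with
`p` not on the subarc from `a` to `b`, the length of that subarc is at least the
angle `∠apb`. -/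
theorem stmt10 (γ : ℝ → E3) (L : ℝ) (hL : 0 < L) (hcont : Continuous γ)
    (hper : Function.Periodic γ L) (hinj : Set.InjOn γ (Set.Ico 0 L))
    (hthick : ThickOne (Set.range γ))
    (p a b : E3) (s t : ℝ) (hst : s ≤ t)
    (hγs : γ s = a) (hγt : γ t = b)
    (hp : p ∈ Set.range γ) (hpnot : p ∉ γ '' Set.Icc s t) :
    ENNReal.ofReal (EuclideanGeometry.angle a p b) ≤ eVariationOn γ (Set.Icc s t) :=
  stmt10_general γ hcont hthick p a b s t hst hγs hγt hp hpnot
end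

section
/- Let K be a closed curve of unit thickness, a, b ∈ K, and p a point on the subarc of K from a to b such that both a and b lie outside the open unit ball B(p). Then the complementary subarc of K from b to a lies entirely outside B(p). -/
/-
Suppose the complementary arc `γ '' [t, s + L]` enters `B(p)`, and let `γ u₀` be a point of it
closest to `p`, at distance `r ∈ (0, 1)`; since the endpoints `b` and `a` are outside `B(p)`,
`u₀` is an interior parameter, so `u ↦ dist (γ u) p` has a local minimum at `u₀` and therefore
takes some value twice at parameters arbitrarily close to `u₀`. This gives distinct points
`z₁, z₂` of the curve, arbitrarily close to each other, both at a distance `r'` from `p` close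
to `r`. The circle through `p, z₁, z₂` has radius `r' ^ 2 / √(4 r' ^ 2 - |z₁ - z₂| ^ 2)`, which
tends to `r / 2 < 1 / 2`, contradicting unit thickness.
-/

open Real Set

open Filter Topology RealInnerProductSpace

theorem Function.Periodic.injOn_Ico_add {α β : Type*} [AddCommGroup α] [LinearOrder α]
    [IsOrderedAddMonoid α] [Archimedean α] {f : α → β} {c : α} (hf : Function.Periodic f c)
    (hc : 0 < c) {a : α} (hinj : InjOn f (Ico a (a + c))) (b : α) :
    InjOn f (Ico b (b + c)) := by
  have hmod : ∀ x, f (toIcoMod hc a x) = f x := fun x => by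
    rw [← self_sub_toIcoDiv_zsmul, hf.sub_zsmul_eq]
  intro x hx y hy hxy
  have h : toIcoMod hc a x = toIcoMod hc a y :=
    hinj (toIcoMod_mem_Ico hc a x) (toIcoMod_mem_Ico hc a y) (by rw [hmod, hmod, hxy])
  rw [← (toIcoMod_eq_self hc).2 hx, ← (toIcoMod_eq_self hc).2 hy]
  exact (toIcoMod_inj hc).2 ((toIcoMod_inj hc).1 h)

theorem not_injOn_Icc_of_isMinOn {α δ : Type*} [ConditionallyCompleteLinearOrder α]
    [DenselyOrdered α] [TopologicalSpace α] [OrderTopology α] [LinearOrder δ]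
    [TopologicalSpace δ] [OrderClosedTopology δ] {f : α → δ} {a b c : α}
    (hf : ContinuousOn f (Icc a b)) (hmin : IsMinOn f (Icc a b) c) (hac : a < c) (hcb : c < b) :
    ¬ InjOn f (Icc a b) := by
  intro hinj
  have hab : a ≤ b := (hac.trans hcb).le
  have hc : c ∈ Icc a b := ⟨hac.le, hcb.le⟩
  rcases hf.strictMonoOn_of_injOn_Icc' hab hinj with hmono | hanti
  · exact (hmono (left_mem_Icc.2 hab) hc hac).not_ge (hmin (left_mem_Icc.2 hab))
  · exact (hanti hc (right_mem_Icc.2 hab) hcb).not_ge (hmin (right_mem_Icc.2 hab))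

theorem norm_sub_smul_add_eq_of_norm_eq {V : Type*} [NormedAddCommGroup V] [InnerProductSpace ℝ V]
    {x y : V} (h : ‖x‖ = ‖y‖) (hxy : x + y ≠ 0) :
    ‖x - (‖x‖ ^ 2 / ‖x + y‖ ^ 2) • (x + y)‖ = ‖(‖x‖ ^ 2 / ‖x + y‖ ^ 2) • (x + y)‖ := by
  set α := ‖x‖ ^ 2 / ‖x + y‖ ^ 2
  have hα : α * ‖x + y‖ ^ 2 = ‖x‖ ^ 2 := div_mul_cancel₀ _ (by positivity)
  clear_value α
  have hinner : ⟪x, x + y⟫ = ‖x + y‖ ^ 2 / 2 := by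
    rw [inner_add_right, real_inner_self_eq_norm_sq, norm_add_sq_real, ← h]
    ring
  rw [← sq_eq_sq₀ (norm_nonneg _) (norm_nonneg _), norm_sub_sq_real, real_inner_smul_right,
    hinner, norm_smul, mul_pow, Real.norm_eq_abs, sq_abs]
  linear_combination -hα

theorem exists_circumcenter_of_dist_eq {V : Type*} [NormedAddCommGroup V] [InnerProductSpace ℝ V]
    {p z₁ z₂ : V} {r : ℝ} (h₁ : dist z₁ p = r) (h₂ : dist z₂ p = r) (hd : dist z₁ z₂ < 2 * r) :
    ∃ c, dist p c = r ^ 2 / √(4 * r ^ 2 - dist z₁ z₂ ^ 2) ∧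
      dist z₁ c = dist p c ∧ dist z₂ c = dist p c := by
  set u := z₁ - p
  set v := z₂ - p
  have hu : ‖u‖ = r := by rw [← dist_eq_norm, h₁]
  have hv : ‖v‖ = r := by rw [← dist_eq_norm, h₂]
  have huv : ‖u - v‖ = dist z₁ z₂ := by rw [sub_sub_sub_cancel_right, dist_eq_norm]
  have hw : ‖u + v‖ = √(4 * r ^ 2 - dist z₁ z₂ ^ 2) := by
    rw [← huv, ← Real.sqrt_sq (norm_nonneg (u + v))]
    have := parallelogram_law_with_norm ℝ u v
    rw [hu, hv] at this
    congr 1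
    linarith
  have hw0 : u + v ≠ 0 := by
    rw [← norm_pos_iff, hw]
    exact Real.sqrt_pos.2 (by nlinarith [dist_nonneg (x := z₁) (y := z₂)])
  have hw0' : ‖u + v‖ ≠ 0 := norm_ne_zero_iff.2 hw0
  have key₁ := norm_sub_smul_add_eq_of_norm_eq (hu.trans hv.symm) hw0
  have key₂ := norm_sub_smul_add_eq_of_norm_eq (hv.trans hu.symm) (add_comm u v ▸ hw0)
  rw [hu] at key₁
  rw [hv, add_comm v u] at key₂
  refine ⟨p + (r ^ 2 / ‖u + v‖ ^ 2) • (u + v), ?_, ?_, ?_⟩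
  · rw [dist_comm, dist_eq_norm, add_sub_cancel_left, norm_smul, Real.norm_eq_abs,
      abs_of_nonneg (by positivity), ← hw]
    field_simp
  · rw [dist_comm p, dist_eq_norm, dist_eq_norm, add_sub_cancel_left, sub_add_eq_sub_sub, key₁]
  · rw [dist_comm p, dist_eq_norm, dist_eq_norm, add_sub_cancel_left, sub_add_eq_sub_sub, key₂]

theorem ThickOne.four_mul_sq_mul_one_sub_sq_le {K : Set E3} (hK : ThickOne K) {p z₁ z₂ : E3}
    (hp : p ∈ K) (h₁ : z₁ ∈ K) (h₂ : z₂ ∈ K) (hne : z₁ ≠ z₂) {r : ℝ}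
    (hr₁ : dist z₁ p = r) (hr₂ : dist z₂ p = r) :
    4 * r ^ 2 * (1 - r ^ 2) ≤ dist z₁ z₂ ^ 2 := by
  by_contra! hlt
  have hr : 0 < r :=
    lt_of_le_of_ne (hr₁ ▸ dist_nonneg) (by rintro rfl; nlinarith [sq_nonneg (dist z₁ z₂)])
  have hd : dist z₁ z₂ < 2 * r := by nlinarith [dist_nonneg (x := z₁) (y := z₂)]
  have hpz₁ : p ≠ z₁ := fun h => hr.ne' (by rw [← hr₁, h, dist_self])
  have hpz₂ : p ≠ z₂ := fun h => hr.ne' (by rw [← hr₂, h, dist_self])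
  obtain ⟨c, hc, hc₁, hc₂⟩ := exists_circumcenter_of_dist_eq hr₁ hr₂ hd
  have hρ := hK p hp z₁ h₁ z₂ h₂ hpz₁ hne hpz₂ c _ rfl hc₁ hc₂
  have hD : 0 < 4 * r ^ 2 - dist z₁ z₂ ^ 2 := by nlinarith
  rw [hc, le_div_iff₀ (Real.sqrt_pos.2 hD)] at hρ
  have hD_le := (Real.sqrt_le_iff.1 (show √(4 * r ^ 2 - dist z₁ z₂ ^ 2) ≤ 2 * r ^ 2 by linarith)).2
  nlinarith

theorem ThickOne.not_isLocalMin_dist {γ : ℝ → E3} (hK : ThickOne (range γ)) (hγ : Continuous γ)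
    {U : Set ℝ} {u₀ : ℝ} (hU : U ∈ 𝓝 u₀) (hinj : InjOn γ U) {p : E3} (hp : p ∈ range γ)
    (h₀ : 0 < dist (γ u₀) p) (h₁ : dist (γ u₀) p < 1) :
    ¬ IsLocalMin (fun x => dist (γ x) p) u₀ := by
  intro hmin
  have hclose : ∀ᶠ q in 𝓝 u₀ ×ˢ 𝓝 u₀,
      dist (γ q.1) (γ q.2) ^ 2 < 4 * dist (γ q.1) p ^ 2 * (1 - dist (γ q.1) p ^ 2) := by
    rw [← nhds_prod_eq]
    refine ContinuousAt.eventually_lt (by fun_prop) (by fun_prop) ?_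
    rw [dist_self, zero_pow two_ne_zero]
    exact mul_pos (by positivity) (by nlinarith)
  obtain ⟨T, hT, hTclose⟩ := eventually_prod_self_iff'.1 hclose
  obtain ⟨ε, hε, hsub⟩ := Metric.nhds_basis_closedBall.mem_iff.1 (inter_mem (inter_mem hT hU) hmin)
  rw [Real.closedBall_eq_Icc] at hsub
  have hnotinj := not_injOn_Icc_of_isMinOn (f := fun x => dist (γ x) p)
    (by fun_prop) (fun x hx => (hsub hx).2) (by linarith) (by linarith)
  simp only [InjOn, not_forall] at hnotinj
  obtain ⟨x, hx, y, hy, hxy, hne⟩ := hnotinj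
  have := hK.four_mul_sq_mul_one_sub_sq_le hp (mem_range_self x) (mem_range_self y)
    (hinj.ne (hsub hx).1.2 (hsub hy).1.2 hne) rfl hxy.symm
  exact this.not_gt (hTclose x (hsub hx).1.1 y (hsub hy).1.1)

theorem stmt15_general (γ : ℝ → E3) (L : ℝ) (hL : 0 < L) (hcont : Continuous γ)
    (hper : Function.Periodic γ L) (hinj : Set.InjOn γ (Set.Ico 0 L))
    (hthick : ThickOne (Set.range γ))
    (s t : ℝ) (htL : t < s + L)
    (a b p : E3) (hγs : γ s = a) (hγt : γ t = b)
    (hp : p ∈ γ '' Set.Icc s t)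
    (hap : 1 ≤ dist a p) (hbp : 1 ≤ dist b p) :
    ∀ u ∈ Set.Icc t (s + L), 1 ≤ dist (γ u) p := by
  intro u hu
  obtain ⟨w, ⟨hsw, hwt⟩, rfl⟩ := hp
  have hinj' : InjOn γ (Ico s (s + L)) := hper.injOn_Ico_add hL (by rwa [zero_add]) s
  obtain ⟨u₀, hu₀, hmin⟩ :=
    isCompact_Icc.exists_isMinOn ⟨u, hu⟩ (hcont.dist continuous_const).continuousOn
  by_contra! hlt
  have hr₁ : dist (γ u₀) (γ w) < 1 := (hmin hu).trans_lt hlt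
  have ht : t < u₀ := hu₀.1.lt_of_ne (by rintro rfl; rw [hγt] at hr₁; linarith)
  have hsL : u₀ < s + L := hu₀.2.lt_of_ne (fun h => by rw [h, hper s, hγs] at hr₁; linarith)
  have hsu₀ : s < u₀ := by linarith
  have hr₀ : 0 < dist (γ u₀) (γ w) :=
    dist_pos.2 (hinj'.ne ⟨hsu₀.le, hsL⟩ ⟨hsw, hwt.trans_lt htL⟩ (by linarith))
  exact hthick.not_isLocalMin_dist hcont (Ico_mem_nhds hsu₀ hsL) hinj'
    (mem_range_self w) hr₀ hr₁ (hmin.isLocalMin (Icc_mem_nhds ht hsL))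

/-- For a closed curve of unit thickness, if `p` lies on the subarc from `a` to `b`
and both `a` and `b` lie outside the open unit ball `B(p)`, then the complementary
subarc from `b` to `a` lies entirely outside `B(p)`. -/
theorem stmt15 (γ : ℝ → E3) (L : ℝ) (hL : 0 < L) (hcont : Continuous γ)
    (hper : Function.Periodic γ L) (hinj : Set.InjOn γ (Set.Ico 0 L))
    (hthick : ThickOne (Set.range γ))
    (s t : ℝ) (hst : s < t) (htL : t < s + L)
    (a b p : E3) (hγs : γ s = a) (hγt : γ t = b)
    (hp : p ∈ γ '' Set.Icc s t)
    (hap : 1 ≤ dist a p) (hbp : 1 ≤ dist b p) :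
    ∀ u ∈ Set.Icc t (s + L), 1 ≤ dist (γ u) p :=
  stmt15_general γ L hL hcont hper hinj hthick s t htL a b p hγs hγt hp hap hbp
end
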